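/- Σ_{n=1}^{∞} H_n/n! = e · Σ_{n=1}^{∞} (−1)^{n−1}/(n!·n), where H_n = Σ_{k=1}^{n} 1/k is the n-th harmonic number. -/

import Mathlib

/-!
Cauchy product: multiplying `e = ∑ 1/k!` by `∑ (-1)^m / ((m+1)! (m+1))`, the `n`-th coefficient is
`(1/(n+1)!) ∑_m (-1)^m C(n+1, m+1) / (m+1)`, and this alternating binomial sum is `H_{n+1}`.
-/

open Finset Nat

theorem sum_range_neg_one_pow_mul_choose_succ {R : Type*} [Ring R] (n : ℕ) :
    ∑ m ∈ range (n + 1), (-1 : R) ^ m * (n + 1).choose (m + 1) = 1 := by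
  have h := Int.alternating_sum_range_choose_of_ne n.succ_ne_zero
  rw [sum_range_succ'] at h
  simp only [pow_succ, mul_neg_one, neg_mul, sum_neg_distrib, pow_zero, choose_zero_right,
    cast_one, mul_one] at h
  exact_mod_cast congrArg (Int.cast : ℤ → R) (neg_add_eq_zero.mp h)

theorem harmonic_eq_sum_range_neg_one_pow_mul_choose (n : ℕ) :
    harmonic n = ∑ m ∈ range n, (-1 : ℚ) ^ m * n.choose (m + 1) / (m + 1) := by
  induction n with
  | zero => simp
  | succ n ih =>
    have pascal (m : ℕ) : (-1 : ℚ) ^ m * (n + 1).choose (m + 1) / (m + 1) =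
        (-1) ^ m * n.choose (m + 1) / (m + 1) + (-1) ^ m * (n + 1).choose (m + 1) / (n + 1) := by
      have h : ((n + 1 : ℕ) : ℚ) * n.choose m = (n + 1).choose (m + 1) * (m + 1 : ℕ) := by
        exact_mod_cast Nat.add_one_mul_choose_eq n m
      have hp : ((n + 1).choose (m + 1) : ℚ) = n.choose m + n.choose (m + 1) := by
        exact_mod_cast Nat.choose_succ_succ' n m
      field_simp
      push_cast at h
      linear_combination h + (n + 1) * hp
    rw [harmonic_succ, ih, sum_congr rfl fun m _ => pascal m, sum_add_distrib, ← sum_div,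
      sum_range_neg_one_pow_mul_choose_succ, sum_range_succ _ n, Nat.choose_succ_self]
    push_cast
    ring

theorem summable_norm_inv_factorial : Summable fun n : ℕ => ‖(n ! : ℝ)⁻¹‖ := by
  simpa using Real.summable_pow_div_factorial 1

theorem summable_norm_neg_one_pow_div_factorial_succ_mul_succ :
    Summable fun n : ℕ => ‖(-1 : ℝ) ^ n / ((n + 1)! * (n + 1))‖ := by
  refine .of_nonneg_of_le (fun _ => norm_nonneg _) (fun n => ?_) summable_norm_inv_factorial
  have h : n ! ≤ (n + 1)! * (n + 1) :=
    (Nat.factorial_le n.le_succ).trans (Nat.le_mul_of_pos_right _ n.succ_pos)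
  rw [norm_div, norm_pow, norm_neg, norm_one, one_pow, Real.norm_of_nonneg (by positivity),
    norm_inv, norm_natCast, one_div]
  gcongr
  exact_mod_cast h

theorem sum_range_neg_one_pow_div_factorial_mul_inv_factorial (n : ℕ) :
    ∑ m ∈ range (n + 1), (-1 : ℝ) ^ m / ((m + 1)! * (m + 1)) * ((n - m)! : ℝ)⁻¹ =
      harmonic (n + 1) / (n + 1)! := by
  rw [harmonic_eq_sum_range_neg_one_pow_mul_choose]
  push_cast
  rw [sum_div]
  refine sum_congr rfl fun m hm => ?_
  rw [Nat.cast_choose ℝ (Nat.add_le_add_right (mem_range_succ_iff.mp hm) 1),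
    Nat.add_sub_add_right]
  field_simp

/-- `∑_{n=1}^∞ H_n/n! = e ∑_{n=1}^∞ (-1)^{n-1}/(n!·n)`. -/
theorem harmonic_factorial_sum :
    ∑' n : ℕ, (∑ k ∈ Finset.Icc 1 (n + 1), (1 : ℝ) / k) / ((n + 1).factorial : ℝ) =
      Real.exp 1 * ∑' n : ℕ, (-1 : ℝ) ^ n / (((n + 1).factorial : ℝ) * (n + 1)) := by
  have exp_one : Real.exp 1 = ∑' n : ℕ, (n ! : ℝ)⁻¹ := by
    simp [Real.exp_eq_exp_ℝ, NormedSpace.exp_eq_tsum_div]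
  rw [exp_one, mul_comm, tsum_mul_tsum_eq_tsum_sum_range_of_summable_norm
    summable_norm_neg_one_pow_div_factorial_succ_mul_succ summable_norm_inv_factorial]
  refine tsum_congr fun n => ?_
  rw [sum_range_neg_one_pow_div_factorial_mul_inv_factorial, harmonic_eq_sum_Icc]
  push_cast
  simp only [one_div]
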